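/- arXiv:math/0011026 — 2 statements merged into one kernel-verified Lean document; each statement's English description precedes it below -/
import Mathlib

section
/- If m⁺(t)·n⁺(t) ≢ 0 on (T₁, T₂), i.e. there is a point where both m and n are positive, then C_k^{>++} and C_k^{<++} are nonempty for every k ≥ 2. Consequently the Fučík spectrum of -(p u')' + q u = a m u⁺ - b n u⁻ with Dirichlet conditions contains infinitely many hyperbolic-like curves in ℝ⁺ × ℝ⁺. -/
open Set Filter Classical

noncomputable section

/-- `u c s` is the solution of `-(p·u')' + q·u = c·w·u` with `u c s s = 0` and
`(u c s)' s = 1/(p s)`; `u'` is its `t`-derivative. -/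
def IsSolFamily (p q w : ℝ → ℝ) (u u' : ℝ → ℝ → ℝ → ℝ) : Prop :=
  ∀ c s : ℝ, u c s s = 0 ∧ u' c s s = 1 / p s ∧
    ∀ t : ℝ, HasDerivAt (u c s) (u' c s t) t ∧
      HasDerivAt (fun τ => p τ * u' c s τ) (q t * u c s t - c * w t * u c s t) t

/-- Zero set of `u c s` strictly after `s`. -/
def zeroSet (u : ℝ → ℝ → ℝ → ℝ) (c s : ℝ) : Set ℝ := {t | s < t ∧ u c s t = 0}

/-- The zero-function `φ_c(s)`, valued in `EReal` (equal to `⊤` when `u c s`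
never vanishes after `s`). -/
noncomputable def phiE (u : ℝ → ℝ → ℝ → ℝ) (c s : ℝ) : EReal :=
  if (zeroSet u c s).Nonempty then ((sInf (zeroSet u c s) : ℝ) : EReal) else ⊤

/-- The zero-function as a map `EReal → EReal` (`⊤` propagates). -/
noncomputable def phiStep (u : ℝ → ℝ → ℝ → ℝ) (c : ℝ) (x : EReal) : EReal :=
  if x = ⊤ ∨ x = ⊥ then ⊤ else phiE u c x.toReal

/-- `Φ_k^>(a,b)`: composition of `k` alternating zero-functions `φ_a^m, φ_b^n`,
starting with `φ_a^m`. -/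
noncomputable def PhiGt (uM uN : ℝ → ℝ → ℝ → ℝ) (a b : ℝ) : ℕ → EReal → EReal
  | 0 => id
  | k + 1 => (if k % 2 = 0 then phiStep uM a else phiStep uN b) ∘ PhiGt uM uN a b k

/-- `Φ_k^<(a,b)`: composition of `k` alternating zero-functions, starting with
`φ_b^n`. -/
noncomputable def PhiLt (uM uN : ℝ → ℝ → ℝ → ℝ) (a b : ℝ) : ℕ → EReal → EReal
  | 0 => id
  | k + 1 => (if k % 2 = 0 then phiStep uN b else phiStep uM a) ∘ PhiLt uM uN a b k

/-- `C_k^{>++} = {(a,b) ∈ ℝ⁺×ℝ⁺ : Φ_k^>(a,b)(T₁) = T₂}`. -/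
def CGt (uM uN : ℝ → ℝ → ℝ → ℝ) (T₁ T₂ : ℝ) (k : ℕ) : Set (ℝ × ℝ) :=
  {ab | 0 < ab.1 ∧ 0 < ab.2 ∧ PhiGt uM uN ab.1 ab.2 k (T₁ : EReal) = (T₂ : EReal)}

/-- `C_k^{<++} = {(a,b) ∈ ℝ⁺×ℝ⁺ : Φ_k^<(a,b)(T₁) = T₂}`. -/
def CLt (uM uN : ℝ → ℝ → ℝ → ℝ) (T₁ T₂ : ℝ) (k : ℕ) : Set (ℝ × ℝ) :=
  {ab | 0 < ab.1 ∧ 0 < ab.2 ∧ PhiLt uM uN ab.1 ab.2 k (T₁ : EReal) = (T₂ : EReal)}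

open Topology Function Real

/-!
Fix `b = A` large. On an interval `[t₁, t₂] ⊂ (T₁, T₂)` where `m, n ≥ μ > 0`, Sturm comparison
with `sin (ω ∫ 1/p)` shows that for `c ≥ A` every solution of `-(p u')' + q u = c m u` (and of the
`n`-equation) vanishes in each window of length `(t₂ - t₁)/k`, so `Φ_k^>(A, A)(T₁) < T₂`.
For `a = 0` the solution started at `T₁` never vanishes again because `q ≥ 0`, so
`Φ_k^>(0, A)(T₁) = ⊤`. By Grönwall's inequality the solutions depend continuously on `(c, s)`,
and their first zero after `s` is simple; hence `(c, s) ↦ φ_c(s)` is continuous into `EReal`,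
so is `a ↦ Φ_k^>(a, A)(T₁)`, and the intermediate value theorem yields `a ∈ (0, A)` with
`Φ_k^>(a, A)(T₁) = T₂`. Swapping `m` and `n` gives `C_k^{<++}`.
-/

lemma exists_Icc_subset_of_pos {f : ℝ → ℝ} (hf : Continuous f) {T₁ T₂ t₀ : ℝ}
    (ht₀ : t₀ ∈ Ioo T₁ T₂) (hpos : 0 < f t₀) :
    ∃ t₁ t₂ μ : ℝ, T₁ < t₁ ∧ t₁ < t₂ ∧ t₂ < T₂ ∧ 0 < μ ∧ ∀ t ∈ Icc t₁ t₂, μ ≤ f t := by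
  have hev : ∀ᶠ t in 𝓝 t₀, f t₀ / 2 < f t ∧ t ∈ Ioo T₁ T₂ :=
    ((hf.tendsto t₀).eventually (lt_mem_nhds (half_lt_self hpos))).and
      (Ioo_mem_nhds ht₀.1 ht₀.2)
  obtain ⟨δ, hδ, hball⟩ := Metric.eventually_nhds_iff.1 hev
  have hIcc : ∀ t ∈ Icc (t₀ - δ / 2) (t₀ + δ / 2), f t₀ / 2 < f t ∧ t ∈ Ioo T₁ T₂ := by
    intro t ht
    refine hball (abs_sub_lt_iff.2 ⟨?_, ?_⟩) <;> linarith [ht.1, ht.2]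
  refine ⟨t₀ - δ / 2, t₀ + δ / 2, f t₀ / 2, ?_, by linarith, ?_, half_pos hpos,
    fun t ht => (hIcc t ht).1.le⟩
  · exact (hIcc _ (left_mem_Icc.2 (by linarith))).2.1
  · exact (hIcc _ (right_mem_Icc.2 (by linarith))).2.2

lemma abs_le_mul_exp_of_abs_deriv_le_of_le {F F' : ℝ → ℝ} {K σ t : ℝ}
    (hF : ∀ x, HasDerivAt F (F' x) x) (hF' : ∀ x ∈ Icc σ t, |F' x| ≤ K * |F x|)
    (hσt : σ ≤ t) : |F t| ≤ |F σ| * exp (K * (t - σ)) := by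
  have h := norm_le_gronwallBound_of_norm_deriv_right_le (δ := |F σ|) (ε := 0)
    (fun x _ => (hF x).continuousAt.continuousWithinAt) (fun x _ => (hF x).hasDerivWithinAt)
    le_rfl (fun x hx => by simpa using hF' x (Ico_subset_Icc_self hx)) t ⟨hσt, le_rfl⟩
  simpa [gronwallBound_ε0] using h

lemma abs_le_mul_exp_of_abs_deriv_le {F F' : ℝ → ℝ} {K α β σ t : ℝ}
    (hF : ∀ x, HasDerivAt F (F' x) x) (hF' : ∀ x ∈ Icc α β, |F' x| ≤ K * |F x|)
    (hσ : σ ∈ Icc α β) (ht : t ∈ Icc α β) : |F t| ≤ |F σ| * exp (K * |t - σ|) := by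
  rcases le_total σ t with hσt | htσ
  · rw [abs_of_nonneg (sub_nonneg.2 hσt)]
    exact abs_le_mul_exp_of_abs_deriv_le_of_le hF
      (fun x hx => hF' x ⟨hσ.1.trans hx.1, hx.2.trans ht.2⟩) hσt
  · have h := abs_le_mul_exp_of_abs_deriv_le_of_le (F := fun x => F (-x))
      (F' := fun x => -F' (-x)) (K := K) (σ := -σ) (t := -t)
      (fun x => ((hF (-x)).comp x (hasDerivAt_neg x)).congr_deriv (by simp))
      (fun x hx => by simpa using hF' (-x) ⟨by linarith [hx.2, ht.1], by linarith [hx.1, hσ.2]⟩)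
      (neg_le_neg htσ)
    rw [abs_of_nonpos (sub_nonpos.2 htσ)]
    simpa [neg_neg, show -t - -σ = -(t - σ) by ring] using h

lemma sq_add_sq_le_of_hasDerivAt {y Y a b g : ℝ → ℝ} {C D α β σ t : ℝ}
    (hy : ∀ x, HasDerivAt y (b x * Y x) x) (hY : ∀ x, HasDerivAt Y (a x * y x + g x) x)
    (hb : ∀ x ∈ Icc α β, |b x| ≤ C) (ha : ∀ x ∈ Icc α β, |a x| ≤ C)
    (hg : ∀ x ∈ Icc α β, g x ^ 2 ≤ D) (hσ : σ ∈ Icc α β) (ht : t ∈ Icc α β) :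
    y t ^ 2 + Y t ^ 2 ≤ (y σ ^ 2 + Y σ ^ 2 + D) * exp ((2 * C + 1) * |t - σ|) := by
  have hD : 0 ≤ D := (sq_nonneg _).trans (hg σ hσ)
  have hF : ∀ x, HasDerivAt (fun x => y x ^ 2 + Y x ^ 2 + D)
      (2 * y x * Y x * (a x + b x) + 2 * Y x * g x) x := fun x => by
    refine ((((hy x).fun_pow 2).fun_add ((hY x).fun_pow 2)).add_const D).congr_deriv ?_
    push_cast; ring
  have hF' : ∀ x ∈ Icc α β, |2 * y x * Y x * (a x + b x) + 2 * Y x * g x| ≤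
      (2 * C + 1) * |y x ^ 2 + Y x ^ 2 + D| := fun x hx => by
    rw [abs_of_nonneg (show 0 ≤ y x ^ 2 + Y x ^ 2 + D by positivity)]
    have hab : |a x + b x| ≤ 2 * C := by linarith [abs_add_le (a x) (b x), ha x hx, hb x hx]
    have h₁ : |2 * y x * Y x * (a x + b x)| ≤ (y x ^ 2 + Y x ^ 2) * (2 * C) := by
      have hyY : |2 * y x * Y x| ≤ y x ^ 2 + Y x ^ 2 := by
        rw [abs_le]; constructor <;> nlinarith [sq_nonneg (y x + Y x), sq_nonneg (y x - Y x)]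
      rw [abs_mul]
      exact mul_le_mul hyY hab (abs_nonneg _) (by positivity)
    have h₂ : |2 * Y x * g x| ≤ Y x ^ 2 + D := by
      rw [abs_le]; constructor <;> nlinarith [sq_nonneg (Y x + g x), sq_nonneg (Y x - g x), hg x hx]
    have hC : 0 ≤ C := (abs_nonneg _).trans (ha x hx)
    nlinarith [abs_add_le (2 * y x * Y x * (a x + b x)) (2 * Y x * g x), sq_nonneg (y x)]
  have h := abs_le_mul_exp_of_abs_deriv_le hF hF' hσ ht
  rw [abs_of_nonneg (by positivity), abs_of_nonneg (by positivity)] at h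
  nlinarith [exp_pos ((2 * C + 1) * |t - σ|)]

lemma tendsto_zero_of_sq_le {ι : Type*} {l : Filter ι} {f g : ι → ℝ}
    (hg : Tendsto g l (𝓝 0)) (h : ∀ i, f i ^ 2 ≤ g i) : Tendsto f l (𝓝 0) :=
  squeeze_zero_norm (fun i => abs_le_sqrt (h i)) (by simpa using hg.sqrt)

lemma eventually_forall_pos_of_isCompact {X Y : Type*} [TopologicalSpace X] [TopologicalSpace Y]
    {F : X × Y → ℝ} (hF : Continuous F) {K : Set Y} (hK : IsCompact K) {x₀ : X}
    (h : ∀ y ∈ K, 0 < F (x₀, y)) : ∀ᶠ x in 𝓝 x₀, ∀ y ∈ K, 0 < F (x, y) :=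
  hK.eventually_forall_of_forall_eventually fun y hy =>
    continuousAt_const.eventually_lt hF.continuousAt (h y hy)

lemma div_le_integral_one_div {p : ℝ → ℝ} (hp : Continuous p) (hppos : ∀ t, 0 < p t)
    {a b P : ℝ} (hab : a ≤ b) (hP : ∀ t ∈ Icc a b, p t ≤ P) :
    (b - a) / P ≤ ∫ t in a..b, 1 / p t := by
  have h : ∫ _ in a..b, 1 / P ≤ ∫ t in a..b, 1 / p t :=
    intervalIntegral.integral_mono_on hab intervalIntegrable_const
      ((continuous_const.div hp fun t => (hppos t).ne').intervalIntegrable a b)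
      fun t ht => one_div_le_one_div_of_le (hppos t) (hP t ht)
  rwa [intervalIntegral.integral_const, smul_eq_mul, ← div_eq_mul_one_div] at h

/-- Sturm comparison with `v = sin (ω' ∫_α^t 1/p)`, where `ω' = π / ∫_α^β 1/p ≤ ω`:
`(p v')' = -ω'^2 v / p`, so the Wronskian `p U' v - p v' U` is nonincreasing on `[α, β]`,
whereas it equals `-ω' U α` at `α` and `ω' U β` at `β`. -/
lemma exists_nonpos_of_sturm {p g U U' : ℝ → ℝ} {α β ω : ℝ} (hp : Continuous p)
    (hppos : ∀ t, 0 < p t) (hω : 0 < ω) (hαβ : α ≤ β) (hU : ∀ t, HasDerivAt U (U' t) t)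
    (hU' : ∀ t, HasDerivAt (fun τ => p τ * U' τ) (-(g t * U t)) t)
    (hg : ∀ t ∈ Icc α β, ω ^ 2 / p t ≤ g t) (hlen : π ≤ ω * ∫ τ in α..β, 1 / p τ) :
    ∃ t ∈ Icc α β, U t ≤ 0 := by
  by_contra! hpos
  have hcont : Continuous fun τ => 1 / p τ := continuous_const.div hp fun t => (hppos t).ne'
  set X : ℝ → ℝ := fun t => ∫ τ in α..t, 1 / p τ
  have hX : ∀ t, HasDerivAt X (1 / p t) t := fun t =>
    intervalIntegral.integral_hasDerivAt_right (hcont.intervalIntegrable _ _)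
      (hcont.stronglyMeasurableAtFilter _ _) hcont.continuousAt
  have hXmono : Monotone X :=
    (strictMono_of_hasDerivAt_pos hX fun t => one_div_pos.2 (hppos t)).monotone
  have hXα : X α = 0 := intervalIntegral.integral_same
  have hL : 0 < X β := pos_of_mul_pos_right (pi_pos.trans_le hlen) hω.le
  set ω' := π / X β
  have hω' : 0 < ω' := div_pos pi_pos hL
  have hω'ω : ω' ≤ ω := div_le_of_le_mul₀ hL.le hω.le hlen
  have hω'X : ω' * X β = π := div_mul_cancel₀ _ hL.ne'
  have hrange : ∀ t ∈ Icc α β, 0 ≤ ω' * X t ∧ ω' * X t ≤ π := fun t ht =>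
    ⟨mul_nonneg hω'.le (hXα ▸ hXmono ht.1), hω'X ▸ mul_le_mul_of_nonneg_left (hXmono ht.2) hω'.le⟩
  set W : ℝ → ℝ := fun t => p t * U' t * sin (ω' * X t) - ω' * cos (ω' * X t) * U t
  have hW : ∀ t, HasDerivAt W ((ω' ^ 2 / p t - g t) * (U t * sin (ω' * X t))) t := by
    intro t
    have hθ := (hX t).const_mul ω'
    refine (((hU' t).fun_mul hθ.sin).fun_sub ((hθ.cos.const_mul ω').fun_mul (hU t))).congr_deriv ?_
    field_simp [(hppos t).ne']
    ring
  have hanti : AntitoneOn W (Icc α β) :=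
    antitoneOn_of_hasDerivWithinAt_nonpos (convex_Icc _ _)
      (fun x _ => (hW x).continuousAt.continuousWithinAt) (fun x _ => (hW x).hasDerivWithinAt)
      fun x hx => by
        have hx' := interior_subset hx
        have hcoef : ω' ^ 2 / p x ≤ ω ^ 2 / p x :=
          div_le_div_of_nonneg_right (pow_le_pow_left₀ hω'.le hω'ω 2) (hppos x).le
        exact mul_nonpos_of_nonpos_of_nonneg (by linarith [hg x hx'])
          (mul_nonneg (hpos x hx').le (sin_nonneg_of_nonneg_of_le_pi (hrange x hx').1
            (hrange x hx').2))
  have h := hanti (left_mem_Icc.2 hαβ) (right_mem_Icc.2 hαβ) hαβ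
  simp only [W, hXα, hω'X, mul_zero, sin_zero, cos_zero, sin_pi, cos_pi] at h
  nlinarith [hpos α (left_mem_Icc.2 hαβ), hpos β (right_mem_Icc.2 hαβ)]

lemma phiE_ne_bot (u : ℝ → ℝ → ℝ → ℝ) (c s : ℝ) : phiE u c s ≠ ⊥ := by
  unfold phiE
  split_ifs <;> simp

def HasZeroWithin (u : ℝ → ℝ → ℝ → ℝ) (c t₁ t₂ ε : ℝ) : Prop :=
  ∀ s α : ℝ, s ≤ α → t₁ ≤ α → α + ε ≤ t₂ → phiE u c s ≤ ((α + ε : ℝ) : EReal)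

namespace IsSolFamily

variable {p q w : ℝ → ℝ} {u u' : ℝ → ℝ → ℝ → ℝ}

lemma apply_self (hu : IsSolFamily p q w u u') (c s : ℝ) : u c s s = 0 := (hu c s).1

lemma deriv_self (hu : IsSolFamily p q w u u') (c s : ℝ) : u' c s s = 1 / p s := (hu c s).2.1

lemma quasiDeriv_self (hu : IsSolFamily p q w u u') (hppos : ∀ t, 0 < p t) (c s : ℝ) :
    p s * u' c s s = 1 := by
  rw [hu.deriv_self, mul_one_div_cancel (hppos s).ne']

lemma hasDerivAt (hu : IsSolFamily p q w u u') (c s t : ℝ) :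
    HasDerivAt (u c s) (u' c s t) t :=
  ((hu c s).2.2 t).1

lemma hasDerivAt_quasiDeriv (hu : IsSolFamily p q w u u') (c s t : ℝ) :
    HasDerivAt (fun τ => p τ * u' c s τ) ((q t - c * w t) * u c s t) t :=
  ((hu c s).2.2 t).2.congr_deriv (by ring)

lemma hasDerivAt_one_div_mul_quasiDeriv (hu : IsSolFamily p q w u u') (hppos : ∀ t, 0 < p t)
    (c s t : ℝ) :
    HasDerivAt (u c s) (1 / p t * (p t * u' c s t)) t :=
  (hu.hasDerivAt c s t).congr_deriv (by field_simp [(hppos t).ne'])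

lemma continuous (hu : IsSolFamily p q w u u') (c s : ℝ) : Continuous (u c s) :=
  continuous_iff_continuousAt.2 fun t => (hu.hasDerivAt c s t).continuousAt

lemma continuous_quasiDeriv (hu : IsSolFamily p q w u u') (c s : ℝ) :
    Continuous fun t => p t * u' c s t :=
  continuous_iff_continuousAt.2 fun t => (hu.hasDerivAt_quasiDeriv c s t).continuousAt

lemma exists_coeff_bound (hp : Continuous p) (hq : Continuous q) (hw : Continuous w)
    (hppos : ∀ t, 0 < p t) (c₁ c₂ α β : ℝ) :
    ∃ C, (∀ x ∈ Icc α β, |1 / p x| ≤ C) ∧ ∀ c ∈ Icc c₁ c₂, ∀ x ∈ Icc α β, |q x - c * w x| ≤ C := by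
  obtain ⟨C₁, hC₁⟩ := isCompact_Icc.exists_bound_of_continuousOn
    ((continuous_const.div hp fun t => (hppos t).ne').continuousOn (s := Icc α β))
  obtain ⟨C₂, hC₂⟩ := (isCompact_Icc.prod isCompact_Icc).exists_bound_of_continuousOn
    (((hq.comp continuous_snd).sub (continuous_fst.mul (hw.comp continuous_snd))).continuousOn
      (s := Icc c₁ c₂ ×ˢ Icc α β))
  exact ⟨max C₁ C₂, fun x hx => (hC₁ x hx).trans (le_max_left _ _),
    fun c hc x hx => (hC₂ (c, x) ⟨hc, hx⟩).trans (le_max_right _ _)⟩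

lemma sq_add_sq_le (hu : IsSolFamily p q w u u') (hppos : ∀ t, 0 < p t) {c s α β C σ t : ℝ}
    (hC₁ : ∀ x ∈ Icc α β, |1 / p x| ≤ C) (hC₂ : ∀ x ∈ Icc α β, |q x - c * w x| ≤ C)
    (hσ : σ ∈ Icc α β) (ht : t ∈ Icc α β) :
    u c s t ^ 2 + (p t * u' c s t) ^ 2 ≤
      (u c s σ ^ 2 + (p σ * u' c s σ) ^ 2) * exp ((2 * C + 1) * |t - σ|) := by
  simpa using sq_add_sq_le_of_hasDerivAt (g := fun _ => 0) (D := 0)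
    (hu.hasDerivAt_one_div_mul_quasiDeriv hppos c s)
    (fun x => (hu.hasDerivAt_quasiDeriv c s x).congr_deriv (by ring)) hC₁ hC₂
    (fun _ _ => by simp) hσ ht

lemma sq_add_sq_sub_le (hu : IsSolFamily p q w u u') (hppos : ∀ t, 0 < p t)
    {c s c' s' α β C D σ t : ℝ}
    (hC₁ : ∀ x ∈ Icc α β, |1 / p x| ≤ C) (hC₂ : ∀ x ∈ Icc α β, |q x - c * w x| ≤ C)
    (hD : ∀ x ∈ Icc α β, ((c - c') * w x * u c' s' x) ^ 2 ≤ D)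
    (hσ : σ ∈ Icc α β) (ht : t ∈ Icc α β) :
    (u c' s' t - u c s t) ^ 2 + (p t * u' c' s' t - p t * u' c s t) ^ 2 ≤
      ((u c' s' σ - u c s σ) ^ 2 + (p σ * u' c' s' σ - p σ * u' c s σ) ^ 2 + D) *
        exp ((2 * C + 1) * |t - σ|) :=
  sq_add_sq_le_of_hasDerivAt
    (fun x => ((hu.hasDerivAt_one_div_mul_quasiDeriv hppos c' s' x).fun_sub
      (hu.hasDerivAt_one_div_mul_quasiDeriv hppos c s x)).congr_deriv (by ring))
    (fun x => ((hu.hasDerivAt_quasiDeriv c' s' x).fun_sub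
      (hu.hasDerivAt_quasiDeriv c s x)).congr_deriv (by ring)) hC₁ hC₂ hD hσ ht

lemma deriv_ne_zero_of_eq_zero (hu : IsSolFamily p q w u u') (hp : Continuous p)
    (hq : Continuous q) (hw : Continuous w) (hppos : ∀ t, 0 < p t) {c s z : ℝ}
    (hz : u c s z = 0) : u' c s z ≠ 0 := by
  intro hz'
  obtain ⟨C, hC₁, hC₂⟩ := exists_coeff_bound hp hq hw hppos c c (min s z) (max s z)
  have h := hu.sq_add_sq_le hppos hC₁ (hC₂ c ⟨le_rfl, le_rfl⟩) (s := s) (σ := z) (t := s)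
    ⟨min_le_right _ _, le_max_right _ _⟩ ⟨min_le_left _ _, le_max_left _ _⟩
  rw [hz, hz', hu.apply_self, hu.quasiDeriv_self hppos] at h
  norm_num at h

/-- Grönwall for the difference of two solutions; its forcing term `(c - c') w u_{c', s'}` is
controlled by the uniform bound `u_{c', s'}² ≤ E` coming from the energy estimate. -/
lemma exists_sq_add_sq_sub_le (hu : IsSolFamily p q w u u') (hp : Continuous p)
    (hq : Continuous q) (hw : Continuous w) (hppos : ∀ t, 0 < p t) (c s α β : ℝ) :
    ∃ K E : ℝ, ∀ c' ∈ Icc (c - 1) (c + 1), ∀ s' ∈ Icc α β, ∀ t ∈ Icc α β,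
      (u c' s' t - u c s t) ^ 2 + (p t * u' c' s' t - p t * u' c s t) ^ 2 ≤
        (u c s s' ^ 2 + (1 - p s' * u' c s s') ^ 2 + (c - c') ^ 2 * K) * E := by
  obtain ⟨C, hC₁, hC₂⟩ := exists_coeff_bound hp hq hw hppos (c - 1) (c + 1) α β
  obtain ⟨W, hW⟩ := isCompact_Icc.exists_bound_of_continuousOn (hw.continuousOn (s := Icc α β))
  set E := exp ((2 * C + 1) * (β - α))
  have hexp : ∀ σ ∈ Icc α β, ∀ t ∈ Icc α β, exp ((2 * C + 1) * |t - σ|) ≤ E := by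
    intro σ hσ t ht
    have hC : 0 ≤ C := (abs_nonneg _).trans (hC₁ σ hσ)
    exact exp_le_exp.2 (mul_le_mul_of_nonneg_left
      (abs_sub_le_iff.2 ⟨by linarith [ht.2, hσ.1], by linarith [ht.1, hσ.2]⟩) (by positivity))
  have hbound : ∀ c' ∈ Icc (c - 1) (c + 1), ∀ s' ∈ Icc α β, ∀ t ∈ Icc α β,
      u c' s' t ^ 2 ≤ E := by
    intro c' hc' s' hs' t ht
    have h := hu.sq_add_sq_le hppos hC₁ (hC₂ c' hc') (s := s') hs' ht
    rw [hu.apply_self, hu.quasiDeriv_self hppos] at h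
    nlinarith [sq_nonneg (p t * u' c' s' t), hexp s' hs' t ht]
  refine ⟨W ^ 2 * E, E, fun c' hc' s' hs' t ht => ?_⟩
  have hD : ∀ x ∈ Icc α β, ((c - c') * w x * u c' s' x) ^ 2 ≤ (c - c') ^ 2 * (W ^ 2 * E) := by
    intro x hx
    rw [mul_pow, mul_pow, ← mul_assoc]
    exact mul_le_mul (mul_le_mul_of_nonneg_left
      (sq_le_sq' (abs_le.1 (hW x hx)).1 (abs_le.1 (hW x hx)).2) (sq_nonneg _))
      (hbound c' hc' s' hs' x hx) (sq_nonneg _) (by positivity)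
  have h := hu.sq_add_sq_sub_le hppos hC₁ (hC₂ c ⟨by linarith, by linarith⟩) (s := s) hD hs' ht
  rw [hu.apply_self, hu.quasiDeriv_self hppos] at h
  refine h.trans (le_of_eq_of_le (by ring) (mul_le_mul_of_nonneg_left (hexp s' hs' t ht) ?_))
  positivity

lemma tendsto_sq_add_sq_sub (hu : IsSolFamily p q w u u') (hp : Continuous p)
    (hq : Continuous q) (hw : Continuous w) (hppos : ∀ t, 0 < p t) (c s t₀ : ℝ) :
    Tendsto (fun x : (ℝ × ℝ) × ℝ => (u x.1.1 x.1.2 x.2 - u c s x.2) ^ 2 +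
      (p x.2 * u' x.1.1 x.1.2 x.2 - p x.2 * u' c s x.2) ^ 2) (𝓝 ((c, s), t₀)) (𝓝 0) := by
  obtain ⟨K, E, hKE⟩ :=
    hu.exists_sq_add_sq_sub_le hp hq hw hppos c s (min s t₀ - 1) (max s t₀ + 1)
  have hmem : ∀ᶠ x : (ℝ × ℝ) × ℝ in 𝓝 ((c, s), t₀), x.1.1 ∈ Icc (c - 1) (c + 1) ∧
      x.1.2 ∈ Icc (min s t₀ - 1) (max s t₀ + 1) ∧ x.2 ∈ Icc (min s t₀ - 1) (max s t₀ + 1) :=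
    ((continuous_fst.fst.tendsto _).eventually (Icc_mem_nhds (by linarith) (by linarith))).and
      (((continuous_fst.snd.tendsto _).eventually (Icc_mem_nhds (by linarith [min_le_left s t₀])
        (by linarith [le_max_left s t₀]))).and
        ((continuous_snd.tendsto _).eventually (Icc_mem_nhds (by linarith [min_le_right s t₀])
          (by linarith [le_max_right s t₀]))))
  have hB : Tendsto (fun x : (ℝ × ℝ) × ℝ => (u c s x.1.2 ^ 2 +
      (1 - p x.1.2 * u' c s x.1.2) ^ 2 + (c - x.1.1) ^ 2 * K) * E) (𝓝 ((c, s), t₀)) (𝓝 0) := by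
    have hG : Continuous fun s' => u c s s' ^ 2 + (1 - p s' * u' c s s') ^ 2 :=
      ((hu.continuous c s).pow 2).add ((continuous_const.sub (hu.continuous_quasiDeriv c s)).pow 2)
    have hcont : Continuous fun x : (ℝ × ℝ) × ℝ => (u c s x.1.2 ^ 2 +
        (1 - p x.1.2 * u' c s x.1.2) ^ 2 + (c - x.1.1) ^ 2 * K) * E :=
      ((hG.comp continuous_fst.snd).add
        (((continuous_const.sub continuous_fst.fst).pow 2).mul continuous_const)).mul
        continuous_const
    simpa [hu.apply_self, hu.quasiDeriv_self hppos] using hcont.tendsto ((c, s), t₀)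
  exact squeeze_zero' (Eventually.of_forall fun x => by positivity)
    (hmem.mono fun x hx => hKE _ hx.1 _ hx.2.1 _ hx.2.2) hB

theorem continuous_uncurry (hu : IsSolFamily p q w u u') (hp : Continuous p)
    (hq : Continuous q) (hw : Continuous w) (hppos : ∀ t, 0 < p t) :
    Continuous (uncurry (uncurry u)) := by
  refine continuous_iff_continuousAt.2 fun ⟨⟨c, s⟩, t₀⟩ => ?_
  have hsub := tendsto_zero_of_sq_le (hu.tendsto_sq_add_sq_sub hp hq hw hppos c s t₀)
    fun x => le_add_of_nonneg_right (sq_nonneg _)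
  have h := (((hu.continuous c s).tendsto t₀).comp (continuous_snd.tendsto ((c, s), t₀))).add hsub
  rw [add_zero] at h
  exact h.congr fun x => by simp [uncurry]

theorem continuous_uncurry_deriv (hu : IsSolFamily p q w u u') (hp : Continuous p)
    (hq : Continuous q) (hw : Continuous w) (hppos : ∀ t, 0 < p t) :
    Continuous (uncurry (uncurry u')) := by
  refine continuous_iff_continuousAt.2 fun ⟨⟨c, s⟩, t₀⟩ => ?_
  have hsub := tendsto_zero_of_sq_le (hu.tendsto_sq_add_sq_sub hp hq hw hppos c s t₀)
    fun x => le_add_of_nonneg_left (sq_nonneg _)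
  have h := ((((hu.continuous_quasiDeriv c s).tendsto t₀).comp
    (continuous_snd.tendsto ((c, s), t₀))).add hsub).div
    ((hp.tendsto t₀).comp (continuous_snd.tendsto ((c, s), t₀))) (hppos t₀).ne'
  rw [add_zero, mul_div_cancel_left₀ _ (hppos t₀).ne'] at h
  exact h.congr fun x => by simp [uncurry, mul_div_cancel_left₀ _ (hppos x.2).ne']

lemma eventually_forall_Ioc_pos (hu : IsSolFamily p q w u u') (hp : Continuous p)
    (hq : Continuous q) (hw : Continuous w) (hppos : ∀ t, 0 < p t) {c s r : ℝ}
    (hpos : ∀ t ∈ Ioc s r, 0 < u c s t) :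
    ∀ᶠ z in 𝓝 (c, s), ∀ t ∈ Ioc z.2 r, 0 < u z.1 z.2 t := by
  have hderiv : ∀ᶠ t in 𝓝 s, 0 < u' c s t := by
    have h := (hu.continuous_uncurry_deriv hp hq hw hppos).comp (Continuous.prodMk_right (c, s))
    refine (h.tendsto s).eventually (lt_mem_nhds ?_)
    simpa [hu.deriv_self] using hppos s
  obtain ⟨η, hη, hball⟩ := Metric.eventually_nhds_iff.1 hderiv
  filter_upwards [eventually_forall_pos_of_isCompact (hu.continuous_uncurry_deriv hp hq hw hppos)
      (isCompact_Icc (a := s - η / 2) (b := s + η / 2))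
      (fun t ht => hball (abs_sub_lt_iff.2 ⟨by linarith [ht.2], by linarith [ht.1]⟩)),
    eventually_forall_pos_of_isCompact (hu.continuous_uncurry hp hq hw hppos)
      (isCompact_Icc (a := s + η / 2) (b := r)) (fun t ht => hpos t ⟨by linarith [ht.1], ht.2⟩),
    (continuous_snd.tendsto (c, s)).eventually (Ioo_mem_nhds (show s - η / 2 < s by linarith)
      (show s < s + η / 2 by linarith))] with z hderiv' hpos' hz
  intro t ht
  rcases le_or_gt t (s + η / 2) with hts | hts
  · have hmono : StrictMonoOn (u z.1 z.2) (Icc z.2 t) :=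
      strictMonoOn_of_hasDerivWithinAt_pos (convex_Icc _ _) (hu.continuous _ _).continuousOn
        (fun x _ => (hu.hasDerivAt _ _ x).hasDerivWithinAt) fun x hx => by
          rw [interior_Icc] at hx
          exact hderiv' x ⟨by linarith [hz.1, hx.1], by linarith [hx.2]⟩
    simpa [hu.apply_self] using hmono (left_mem_Icc.2 ht.1.le) (right_mem_Icc.2 ht.1.le) ht.1
  · exact hpos' t ⟨hts.le, ht.2⟩

lemma eventually_pos_nhdsGT (hu : IsSolFamily p q w u u') (hppos : ∀ t, 0 < p t) (c s : ℝ) :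
    ∀ᶠ t in 𝓝[>] s, 0 < u c s t := by
  have hd : 0 < deriv (u c s) s := by
    rw [(hu.hasDerivAt c s s).deriv, hu.deriv_self]
    exact one_div_pos.2 (hppos s)
  filter_upwards [(eventually_nhdsWithin_sign_eq_of_deriv_pos hd (hu.apply_self c s)).filter_mono
    nhdsWithin_le_nhds, self_mem_nhdsWithin] with t ht hst
  rwa [sign_pos (sub_pos.2 hst), sign_eq_one_iff] at ht

lemma pos_of_forall_ne_zero (hu : IsSolFamily p q w u u') (hppos : ∀ t, 0 < p t) {c s r : ℝ}
    (h : ∀ t ∈ Ioc s r, u c s t ≠ 0) : ∀ t ∈ Ioc s r, 0 < u c s t := by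
  intro t ht
  refine (h t ht).lt_or_gt.resolve_left fun hneg => ?_
  obtain ⟨ρ, hρpos, hρ⟩ := ((hu.eventually_pos_nhdsGT hppos c s).and (Ioo_mem_nhdsGT ht.1)).exists
  obtain ⟨r', hr', hr'0⟩ := intermediate_value_Icc' hρ.2.le (hu.continuous c s).continuousOn
    ⟨hneg.le, hρpos.le⟩
  exact h r' ⟨hρ.1.trans_le hr'.1, hr'.2.trans ht.2⟩ hr'0

lemma sInf_zeroSet_mem (hu : IsSolFamily p q w u u') (hppos : ∀ t, 0 < p t) {c s : ℝ}
    (hne : (zeroSet u c s).Nonempty) : sInf (zeroSet u c s) ∈ zeroSet u c s := by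
  obtain ⟨δ, hδ, hpos⟩ := (mem_nhdsGT_iff_exists_Ioo_subset).1 (hu.eventually_pos_nhdsGT hppos c s)
  have heq : zeroSet u c s = Ici δ ∩ u c s ⁻¹' {0} := by
    ext t
    refine ⟨fun ht => ⟨not_lt.1 fun htδ => (hpos ⟨ht.1, htδ⟩).ne' ht.2, ht.2⟩,
      fun ht => ⟨lt_of_lt_of_le hδ ht.1, ht.2⟩⟩
  rw [heq] at hne ⊢
  exact (isClosed_Ici.inter (isClosed_singleton.preimage (hu.continuous c s))).csInf_mem hne
    ⟨δ, fun t ht => ht.1⟩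

lemma coe_lt_phiE_iff (hu : IsSolFamily p q w u u') (hppos : ∀ t, 0 < p t) {c s r : ℝ} :
    (r : EReal) < phiE u c s ↔ ∀ t ∈ Ioc s r, u c s t ≠ 0 := by
  unfold phiE
  split_ifs with hne
  · have hmem := hu.sInf_zeroSet_mem hppos hne
    have hbdd : BddBelow (zeroSet u c s) := ⟨s, fun t ht => ht.1.le⟩
    rw [EReal.coe_lt_coe_iff]
    refine ⟨fun hr t ht h0 => ?_, fun h => not_le.1 fun hle => h _ ⟨hmem.1, hle⟩ hmem.2⟩
    exact (csInf_le hbdd ⟨ht.1, h0⟩).not_gt (hr.trans_le' ht.2)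
  · simp only [EReal.coe_lt_top, true_iff]
    exact fun t ht h0 => hne ⟨t, ht.1, h0⟩

lemma lt_phiE (hu : IsSolFamily p q w u u') (hppos : ∀ t, 0 < p t) (c s : ℝ) :
    (s : EReal) < phiE u c s :=
  (hu.coe_lt_phiE_iff hppos).2 fun _ ht => absurd ht.2 (not_le.2 ht.1)

lemma phiE_le (hu : IsSolFamily p q w u u') (hppos : ∀ t, 0 < p t) {c s r : ℝ} (hsr : s < r)
    (hr : u c s r = 0) : phiE u c s ≤ r :=
  not_lt.1 fun h => (hu.coe_lt_phiE_iff hppos).1 h r ⟨hsr, le_rfl⟩ hr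

lemma pos_of_lt_phiE (hu : IsSolFamily p q w u u') (hppos : ∀ t, 0 < p t) {c s t : ℝ}
    (hst : s < t) (ht : (t : EReal) < phiE u c s) : 0 < u c s t :=
  hu.pos_of_forall_ne_zero hppos ((hu.coe_lt_phiE_iff hppos).1 ht) t ⟨hst, le_rfl⟩

lemma mem_zeroSet_of_phiE_eq (hu : IsSolFamily p q w u u') (hppos : ∀ t, 0 < p t) {c s z : ℝ}
    (hz : phiE u c s = z) : z ∈ zeroSet u c s := by
  unfold phiE at hz
  split_ifs at hz with hne
  · rw [← EReal.coe_eq_coe_iff.1 hz]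
    exact hu.sInf_zeroSet_mem hppos hne
  · exact absurd hz.symm (EReal.coe_ne_top z)

/-- The first zero is simple, so the solution changes sign there. -/
lemma eventually_neg_nhdsGT_of_phiE_eq (hu : IsSolFamily p q w u u') (hp : Continuous p)
    (hq : Continuous q) (hw : Continuous w) (hppos : ∀ t, 0 < p t) {c s z : ℝ}
    (hz : phiE u c s = z) : ∀ᶠ t in 𝓝[>] z, u c s t < 0 := by
  obtain ⟨hsz, hz0⟩ := hu.mem_zeroSet_of_phiE_eq hppos hz
  have hd0 := hu.deriv_ne_zero_of_eq_zero hp hq hw hppos hz0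
  have hneg : u' c s z < 0 := by
    refine hd0.lt_or_gt.resolve_right fun hpos => ?_
    have hev := eventually_nhdsWithin_sign_eq_of_deriv_pos ((hu.hasDerivAt c s z).deriv ▸ hpos) hz0
    obtain ⟨t, ht, hts⟩ := ((hev.filter_mono nhdsWithin_le_nhds).and
      (Ioo_mem_nhdsLT hsz)).exists (f := 𝓝[<] z)
    rw [sign_neg (sub_neg.2 hts.2), sign_eq_neg_one_iff] at ht
    exact ht.not_gt (hu.pos_of_lt_phiE hppos hts.1 (hz ▸ EReal.coe_lt_coe_iff.2 hts.2))
  filter_upwards [(eventually_nhdsWithin_sign_eq_of_deriv_neg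
    ((hu.hasDerivAt c s z).deriv ▸ hneg) hz0).filter_mono nhdsWithin_le_nhds,
    self_mem_nhdsWithin] with t ht hzt
  rwa [sign_neg (sub_neg.2 hzt), sign_eq_neg_one_iff] at ht

theorem continuous_phiE (hu : IsSolFamily p q w u u') (hp : Continuous p) (hq : Continuous q)
    (hw : Continuous w) (hppos : ∀ t, 0 < p t) : Continuous (uncurry (phiE u)) := by
  refine continuous_iff_continuousAt.2 fun ⟨c, s⟩ =>
    tendsto_order.2 ⟨fun R hR => ?_, fun R hR => ?_⟩
  · obtain ⟨r, hRr, hr⟩ := EReal.lt_iff_exists_real_btwn.1 (max_lt hR (hu.lt_phiE hppos c s))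
    have hpos := hu.pos_of_forall_ne_zero hppos ((hu.coe_lt_phiE_iff hppos).1 hr)
    filter_upwards [hu.eventually_forall_Ioc_pos hp hq hw hppos hpos] with y hy
    exact (le_max_left _ _).trans_lt
      (hRr.trans ((hu.coe_lt_phiE_iff hppos).2 fun t ht => (hy t ht).ne'))
  · set z := (phiE u c s).toReal
    have hz : phiE u c s = z := (EReal.coe_toReal (hR.trans_le le_top).ne (phiE_ne_bot u c s)).symm
    obtain ⟨hsz, -⟩ := hu.mem_zeroSet_of_phiE_eq hppos hz
    obtain ⟨R', hzR', hR'⟩ := EReal.lt_iff_exists_real_btwn.1 (hz ▸ hR : (z : EReal) < R)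
    obtain ⟨τ, hτneg, hτ⟩ := ((hu.eventually_neg_nhdsGT_of_phiE_eq hp hq hw hppos hz).and
      (Ioo_mem_nhdsGT (EReal.coe_lt_coe_iff.1 hzR'))).exists
    obtain ⟨ρ, hsρ, hρz⟩ := exists_between hsz
    have hρ : 0 < u c s ρ := hu.pos_of_lt_phiE hppos hsρ (hz ▸ EReal.coe_lt_coe_iff.2 hρz)
    have hcont : ∀ t, Continuous fun y : ℝ × ℝ => u y.1 y.2 t := fun t =>
      (hu.continuous_uncurry hp hq hw hppos).comp (Continuous.prodMk_left t)
    filter_upwards [(continuous_snd.tendsto (c, s)).eventually (gt_mem_nhds hsρ),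
      ((hcont ρ).tendsto (c, s)).eventually (lt_mem_nhds hρ),
      ((hcont τ).tendsto (c, s)).eventually (gt_mem_nhds hτneg)] with y hyρ hy₁ hy₂
    obtain ⟨r, hr, hr0⟩ := intermediate_value_Icc' (hρz.trans hτ.1).le
      (hu.continuous y.1 y.2).continuousOn ⟨hy₂.le, hy₁.le⟩
    calc phiE u y.1 y.2 ≤ r := hu.phiE_le hppos (hyρ.trans_le hr.1) hr0
      _ < R := (EReal.coe_lt_coe_iff.2 (hr.2.trans_lt hτ.2)).trans hR'

/-- With `w` switched off, `q ≥ 0` makes the quasi-derivative `p u'` nondecreasing from its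
initial value `1`, so the solution keeps increasing and never returns to zero. -/
lemma phiE_zero_eq_top (hu : IsSolFamily p q w u u') (hppos : ∀ t, 0 < p t)
    (hq0 : ∀ t, 0 ≤ q t) (s : ℝ) : phiE u 0 s = ⊤ := by
  by_contra hne
  set z := (phiE u 0 s).toReal
  have hz : phiE u 0 s = z := (EReal.coe_toReal hne (phiE_ne_bot u 0 s)).symm
  obtain ⟨hsz, hz0⟩ := hu.mem_zeroSet_of_phiE_eq hppos hz
  have hnonneg : ∀ t ∈ Icc s z, 0 ≤ u 0 s t := by
    intro t ht
    rcases ht.1.eq_or_lt with rfl | h₁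
    · rw [hu.apply_self]
    rcases ht.2.eq_or_lt with rfl | h₂
    · rw [hz0]
    exact (hu.pos_of_lt_phiE hppos h₁ (hz ▸ EReal.coe_lt_coe_iff.2 h₂)).le
  have hflux : MonotoneOn (fun t => p t * u' 0 s t) (Icc s z) :=
    monotoneOn_of_hasDerivWithinAt_nonneg (convex_Icc _ _)
      (hu.continuous_quasiDeriv 0 s).continuousOn
      (fun x _ => (hu.hasDerivAt_quasiDeriv 0 s x).hasDerivWithinAt)
      fun x hx => by simpa using mul_nonneg (hq0 x) (hnonneg x (interior_subset hx))
  have hmono : StrictMonoOn (u 0 s) (Icc s z) :=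
    strictMonoOn_of_hasDerivWithinAt_pos (convex_Icc _ _) (hu.continuous 0 s).continuousOn
      (fun x _ => (hu.hasDerivAt 0 s x).hasDerivWithinAt) fun x hx => by
        have hx' := interior_subset hx
        have h₁ : 1 ≤ p x * u' 0 s x :=
          hu.quasiDeriv_self hppos 0 s ▸ hflux (left_mem_Icc.2 hsz.le) hx' hx'.1
        exact (pos_iff_pos_of_mul_pos (by linarith)).1 (hppos x)
  have h := hmono (left_mem_Icc.2 hsz.le) (right_mem_Icc.2 hsz.le) hsz
  rw [hu.apply_self, hz0] at h
  exact lt_irrefl 0 h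

lemma eventually_hasZeroWithin (hu : IsSolFamily p q w u u') (hp : Continuous p)
    (hq : Continuous q) (hppos : ∀ t, 0 < p t) {t₁ t₂ μ ε : ℝ} (hμ : 0 < μ)
    (hwμ : ∀ t ∈ Icc t₁ t₂, μ ≤ w t) (hε : 0 < ε) :
    ∀ᶠ c in atTop, HasZeroWithin u c t₁ t₂ ε := by
  obtain ⟨Q, hQ⟩ := isCompact_Icc.exists_bound_of_continuousOn (hq.continuousOn (s := Icc t₁ t₂))
  obtain ⟨B₁, hB₁⟩ := isCompact_Icc.exists_bound_of_continuousOn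
    ((continuous_const.div hp fun t => (hppos t).ne').continuousOn (s := Icc t₁ t₂))
  obtain ⟨B₂, hB₂⟩ := isCompact_Icc.exists_bound_of_continuousOn (hp.continuousOn (s := Icc t₁ t₂))
  set P := max B₂ 1
  have hP : 0 < P := zero_lt_one.trans_le (le_max_right _ _)
  set ω := 2 * π * P / ε
  have hω : 0 < ω := by positivity
  filter_upwards [eventually_ge_atTop ((Q + ω ^ 2 * B₁) / μ), eventually_ge_atTop 0]
    with c hcA hc0 s α hsα ht₁α hαt₂
  by_contra! hlt
  have hpos := hu.pos_of_forall_ne_zero hppos ((hu.coe_lt_phiE_iff hppos).1 hlt)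
  have hsub : ∀ t ∈ Icc (α + ε / 2) (α + ε), t ∈ Icc t₁ t₂ := fun t ht =>
    ⟨by linarith [ht.1], by linarith [ht.2]⟩
  have hg : ∀ t ∈ Icc (α + ε / 2) (α + ε), ω ^ 2 / p t ≤ c * w t - q t := by
    intro t ht
    have ht' := hsub t ht
    have h₁ : ω ^ 2 / p t ≤ ω ^ 2 * B₁ := by
      rw [div_eq_mul_one_div]
      exact mul_le_mul_of_nonneg_left ((le_abs_self _).trans (hB₁ t ht')) (sq_nonneg _)
    have h₂ : Q + ω ^ 2 * B₁ ≤ c * μ := (div_le_iff₀ hμ).1 hcA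
    have h₃ : c * μ ≤ c * w t := mul_le_mul_of_nonneg_left (hwμ t ht') hc0
    have h₄ : q t ≤ Q := (le_abs_self _).trans (hQ t ht')
    linarith
  have hlen : π ≤ ω * ∫ τ in (α + ε / 2)..(α + ε), 1 / p τ := by
    calc π = ω * ((α + ε - (α + ε / 2)) / P) := by simp only [ω]; field_simp; ring
      _ ≤ _ := mul_le_mul_of_nonneg_left (div_le_integral_one_div hp hppos (by linarith)
          fun t ht => ((le_abs_self _).trans (hB₂ t (hsub t ht))).trans (le_max_left _ _)) hω.le
  obtain ⟨t, ht, hut⟩ := exists_nonpos_of_sturm hp hppos hω (by linarith) (hu.hasDerivAt c s)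
    (fun t => (hu.hasDerivAt_quasiDeriv c s t).congr_deriv (by ring)) hg hlen
  exact hut.not_gt (hpos t ⟨by linarith [ht.1], ht.2⟩)

end IsSolFamily

section Compositions

variable {u uM uN : ℝ → ℝ → ℝ → ℝ}

lemma phiStep_coe (u : ℝ → ℝ → ℝ → ℝ) (c s : ℝ) : phiStep u c s = phiE u c s := by
  simp [phiStep]

lemma phiStep_top (u : ℝ → ℝ → ℝ → ℝ) (c : ℝ) : phiStep u c ⊤ = ⊤ := by
  simp [phiStep]

lemma phiStep_ne_bot (u : ℝ → ℝ → ℝ → ℝ) (c : ℝ) (x : EReal) : phiStep u c x ≠ ⊥ := by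
  unfold phiStep
  split_ifs
  · simp
  · exact phiE_ne_bot u c _

lemma le_phiStep {c : ℝ} (hlt : ∀ s : ℝ, (s : EReal) < phiE u c s) (x : EReal) :
    x ≤ phiStep u c x := by
  induction x using EReal.rec with
  | bot => exact bot_le
  | coe s => exact (phiStep_coe u c s).symm ▸ (hlt s).le
  | top => rw [phiStep_top]

lemma continuousAt_phiStep (hφ : Continuous (uncurry (phiE u)))
    (hlt : ∀ c s : ℝ, (s : EReal) < phiE u c s) {c : ℝ} {x : EReal} (hx : x ≠ ⊥) :
    ContinuousAt (uncurry (phiStep u)) (c, x) := by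
  induction x using EReal.rec with
  | bot => exact absurd rfl hx
  | coe s =>
    have heq : (fun z : ℝ × EReal => phiE u z.1 z.2.toReal) =ᶠ[𝓝 (c, (s : EReal))]
        uncurry (phiStep u) := by
      filter_upwards [(continuous_snd.tendsto (c, (s : EReal))).eventually
        (Ioo_mem_nhds (EReal.bot_lt_coe s) (EReal.coe_lt_top s))] with z hz
      simp [uncurry, phiStep, hz.1.ne', hz.2.ne]
    have htoReal : ContinuousAt EReal.toReal (s : EReal) :=
      EReal.continuousOn_toReal.continuousAt
        ((Set.toFinite {⊥, ⊤}).isClosed.isOpen_compl.mem_nhds (by simp))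
    exact (hφ.continuousAt.comp (continuousAt_fst.prodMk
      (htoReal.comp (f := Prod.snd) (x := (c, (s : EReal))) continuousAt_snd))).congr heq
  | top =>
    show Tendsto _ _ (𝓝 (phiStep u c ⊤))
    rw [phiStep_top, EReal.tendsto_nhds_top_iff_real]
    intro r
    filter_upwards [(continuous_snd.tendsto (c, ⊤)).eventually
      (lt_mem_nhds (EReal.coe_lt_top r))] with z hz
    exact hz.trans_le (le_phiStep (hlt z.1) z.2)

lemma PhiGt_succ (uM uN : ℝ → ℝ → ℝ → ℝ) (a b : ℝ) (k : ℕ) (x : EReal) :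
    PhiGt uM uN a b (k + 1) x =
      (if k % 2 = 0 then phiStep uM a else phiStep uN b) (PhiGt uM uN a b k x) := rfl

lemma PhiGt_ne_bot {a b : ℝ} {x : EReal} (hx : x ≠ ⊥) : ∀ k, PhiGt uM uN a b k x ≠ ⊥
  | 0 => hx
  | k + 1 => by
    rw [PhiGt_succ]
    split_ifs <;> exact phiStep_ne_bot _ _ _

lemma PhiGt_eq_top_of_le {a b : ℝ} {x : EReal} {j k : ℕ} (h : PhiGt uM uN a b j x = ⊤)
    (hjk : j ≤ k) : PhiGt uM uN a b k x = ⊤ := by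
  induction k, hjk using Nat.le_induction with
  | base => exact h
  | succ k _ ih =>
    rw [PhiGt_succ, ih]
    split_ifs <;> exact phiStep_top _ _

theorem continuous_PhiGt (hφM : Continuous (uncurry (phiE uM)))
    (hltM : ∀ c s : ℝ, (s : EReal) < phiE uM c s) (hφN : Continuous (uncurry (phiE uN)))
    (hltN : ∀ c s : ℝ, (s : EReal) < phiE uN c s) (b : ℝ) {x : EReal} (hx : x ≠ ⊥) (k : ℕ) :
    Continuous fun a => PhiGt uM uN a b k x := by
  induction k with
  | zero => exact continuous_const
  | succ k ih =>
    refine continuous_iff_continuousAt.2 fun a => ?_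
    by_cases hk : k % 2 = 0
    · simp only [PhiGt_succ, if_pos hk]
      exact (continuousAt_phiStep hφM hltM (PhiGt_ne_bot hx k)).comp
        (f := fun a => (a, PhiGt uM uN a b k x)) (continuousAt_id.prodMk ih.continuousAt)
    · simp only [PhiGt_succ, if_neg hk]
      exact (continuousAt_phiStep hφN hltN (PhiGt_ne_bot hx k)).comp
        (f := fun a => (b, PhiGt uM uN a b k x)) (continuousAt_const.prodMk ih.continuousAt)

lemma phiStep_le_of_hasZeroWithin {c t₁ t₂ ε r : ℝ} (h : HasZeroWithin u c t₁ t₂ ε) {x : EReal}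
    (hx : x ≠ ⊥) (hxr : x ≤ r) (hr₁ : t₁ ≤ r) (hr₂ : r + ε ≤ t₂) :
    phiStep u c x ≤ ((r + ε : ℝ) : EReal) := by
  induction x using EReal.rec with
  | bot => exact absurd rfl hx
  | coe s => exact (phiStep_coe u c s).symm ▸ h s r (EReal.coe_le_coe_iff.1 hxr) hr₁ hr₂
  | top => exact absurd hxr (not_le.2 (EReal.coe_lt_top r))

lemma PhiGt_le_of_hasZeroWithin {a b t₁ t₂ ε T : ℝ} (hM : HasZeroWithin uM a t₁ t₂ ε)
    (hN : HasZeroWithin uN b t₁ t₂ ε) (hε : 0 ≤ ε) (hT : T ≤ t₁) :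
    ∀ k : ℕ, t₁ + k * ε ≤ t₂ → PhiGt uM uN a b k T ≤ ((t₁ + k * ε : ℝ) : EReal)
  | 0, _ => by simpa [PhiGt] using hT
  | k + 1, hk => by
    push_cast at hk
    have ih := PhiGt_le_of_hasZeroWithin hM hN hε hT k (by linarith)
    have hr₁ : t₁ ≤ t₁ + k * ε := le_add_of_nonneg_right (by positivity)
    rw [PhiGt_succ, show t₁ + ((k + 1 : ℕ) : ℝ) * ε = t₁ + k * ε + ε by push_cast; ring]
    split_ifs
    · exact phiStep_le_of_hasZeroWithin hM (PhiGt_ne_bot (EReal.coe_ne_bot T) k) ih hr₁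
        (by linarith)
    · exact phiStep_le_of_hasZeroWithin hN (PhiGt_ne_bot (EReal.coe_ne_bot T) k) ih hr₁
        (by linarith)

lemma PhiLt_eq_PhiGt (uM uN : ℝ → ℝ → ℝ → ℝ) (a b : ℝ) :
    ∀ (k : ℕ) (x : EReal), PhiLt uM uN a b k x = PhiGt uN uM b a k x
  | 0, _ => rfl
  | k + 1, x => by
    simp only [PhiLt, PhiGt, Function.comp_apply, PhiLt_eq_PhiGt uM uN a b k x]

end Compositions

theorem CGt_nonempty {p q m n : ℝ → ℝ} {uM uM' uN uN' : ℝ → ℝ → ℝ → ℝ} {T₁ T₂ : ℝ}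
    (hp : Continuous p) (hq : Continuous q) (hm : Continuous m) (hn : Continuous n)
    (hppos : ∀ t, 0 < p t) (hqnn : ∀ t, 0 ≤ q t)
    (hM : IsSolFamily p q m uM uM') (hN : IsSolFamily p q n uN uN')
    (hmn : ∃ t ∈ Ioo T₁ T₂, 0 < m t ∧ 0 < n t) {k : ℕ} (hk : 1 ≤ k) :
    (CGt uM uN T₁ T₂ k).Nonempty := by
  obtain ⟨t₀, ht₀, hm₀, hn₀⟩ := hmn
  obtain ⟨t₁, t₂, μ, hT₁, h₁₂, hT₂, hμ, hμmn⟩ :=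
    exists_Icc_subset_of_pos (hm.min hn) ht₀ (lt_min hm₀ hn₀)
  have hk₀ : (0 : ℝ) < k := by exact_mod_cast hk
  set ε := (t₂ - t₁) / k
  have hε : 0 < ε := div_pos (by linarith) hk₀
  have hkε : t₁ + k * ε = t₂ := by simp only [ε]; field_simp; ring
  obtain ⟨A, ⟨hAM, hAN⟩, hA⟩ :=
    (((hM.eventually_hasZeroWithin hp hq hppos hμ
      (fun t ht => (hμmn t ht).trans (min_le_left _ _)) hε).and
    (hN.eventually_hasZeroWithin hp hq hppos hμ
      (fun t ht => (hμmn t ht).trans (min_le_right _ _)) hε)).and (eventually_gt_atTop 0)).exists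
  set f := fun a => PhiGt uM uN a A k (T₁ : EReal)
  have hfA : f A < T₂ := by
    refine (PhiGt_le_of_hasZeroWithin hAM hAN hε.le hT₁.le k hkε.le).trans_lt ?_
    rw [hkε]
    exact_mod_cast hT₂
  have hf₀ : f 0 = ⊤ := PhiGt_eq_top_of_le (j := 1)
    (by simp [PhiGt, phiStep_coe, hM.phiE_zero_eq_top hppos hqnn]) hk
  have hf : Continuous f := continuous_PhiGt (hM.continuous_phiE hp hq hm hppos)
    (hM.lt_phiE hppos) (hN.continuous_phiE hp hq hn hppos) (hN.lt_phiE hppos) A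
    (EReal.coe_ne_bot T₁) k
  obtain ⟨a, ha, hfa⟩ := intermediate_value_Icc' hA.le hf.continuousOn ⟨hfA.le, hf₀ ▸ le_top⟩
  have ha₀ : a ≠ 0 := by
    rintro rfl
    exact EReal.coe_ne_top T₂ (hfa.symm.trans hf₀)
  exact ⟨(a, A), lt_of_le_of_ne ha.1 (Ne.symm ha₀), hA, hfa⟩

theorem infinitely_many_curves_general
    (p q m n : ℝ → ℝ) (uM uM' uN uN' : ℝ → ℝ → ℝ → ℝ) (T₁ T₂ : ℝ)
    (hp : Continuous p) (hq : Continuous q) (hm : Continuous m) (hn : Continuous n)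
    (hppos : ∀ t, 0 < p t) (hqnn : ∀ t, 0 ≤ q t)
    (hM : IsSolFamily p q m uM uM') (hN : IsSolFamily p q n uN uN')
    (hmn : ∃ t ∈ Ioo T₁ T₂, 0 < m t ∧ 0 < n t) :
    ∀ k : ℕ, 2 ≤ k →
      (CGt uM uN T₁ T₂ k).Nonempty ∧ (CLt uM uN T₁ T₂ k).Nonempty := by
  intro k hk
  have hk₁ : 1 ≤ k := by omega
  refine ⟨CGt_nonempty hp hq hm hn hppos hqnn hM hN hmn hk₁, ?_⟩
  obtain ⟨⟨b, a⟩, hb, ha, h⟩ := CGt_nonempty hp hq hn hm hppos hqnn hN hM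
    (hmn.imp fun _ ⟨ht, hmt, hnt⟩ => ⟨ht, hnt, hmt⟩) hk₁
  exact ⟨(a, b), ha, hb, (PhiLt_eq_PhiGt uM uN a b k T₁).trans h⟩

/-- If `m` and `n` are both positive at some point of `(T₁,T₂)`
(`m⁺·n⁺ ≢ 0`), then `C_k^{>++}` and `C_k^{<++}` are nonempty for every `k ≥ 2`:
the Fučík spectrum contains infinitely many hyperbolic-like curves in
`ℝ⁺ × ℝ⁺`. -/
theorem infinitely_many_curves
    (p q m n : ℝ → ℝ) (uM uM' uN uN' : ℝ → ℝ → ℝ → ℝ) (T₁ T₂ : ℝ)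
    (hT : T₁ < T₂)
    (hp : Continuous p) (hq : Continuous q) (hm : Continuous m) (hn : Continuous n)
    (hppos : ∀ t, 0 < p t) (hqnn : ∀ t, 0 ≤ q t)
    (hM : IsSolFamily p q m uM uM') (hN : IsSolFamily p q n uN uN')
    (hmn : ∃ t ∈ Ioo T₁ T₂, 0 < m t ∧ 0 < n t) :
    ∀ k : ℕ, 2 ≤ k →
      (CGt uM uN T₁ T₂ k).Nonempty ∧ (CLt uM uN T₁ T₂ k).Nonempty :=
  infinitely_many_curves_general p q m n uM uM' uN uN' T₁ T₂ hp hq hm hn hppos hqnn hM hN hmn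
end
end

section
/- Suppose m > 0 exactly on a finite union of intervals I₁ ∪ … ∪ I_r (with m ≤ 0 outside), and n ≤ 0 on each closure of I_i (i.e. m⁺·n⁺ ≡ 0 on (T₁,T₂)). Then for all a, b ≥ 0: Φ_k^>(a,b)(T₁) ≥ T₂ whenever k ≥ 2r + 2; consequently C_k^{>++} = ∅ for all k ≥ 2r + 2. -/
open Set Filter Classical

noncomputable section

open Topology

lemma pos_near (v : ℝ → ℝ) (d s : ℝ) (hv0 : v s = 0) (hpos : 0 < d)
    (hd : HasDerivAt v d s) :
    ∃ ε > 0, ∀ t, s < t → t < s + ε → 0 < v t := by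
  have h1 := hasDerivAt_iff_tendsto_slope.1 hd
  have h2 : ∀ᶠ t in 𝓝[≠] s, 0 < slope v s t := h1.eventually (eventually_gt_nhds hpos)
  rw [eventually_nhdsWithin_iff, Metric.eventually_nhds_iff] at h2
  obtain ⟨ε, hε, h⟩ := h2
  refine ⟨ε, hε, fun t hst htε => ?_⟩
  have hne : t ≠ s := ne_of_gt hst
  have hs : 0 < slope v s t := by
    apply h _ hne
    rw [Real.dist_eq, abs_of_pos (by linarith)]
    linarith
  rw [slope_def_field, hv0, sub_zero] at hs
  have h3 : 0 < t - s := by linarith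
  have := mul_pos hs h3
  rwa [div_mul_cancel₀ _ (ne_of_gt h3)] at this

lemma sol_pos_of_nonneg (p q w : ℝ → ℝ) (hppos : ∀ t, 0 < p t)
    (hq : ∀ t, 0 ≤ q t) (v v' : ℝ → ℝ) (c s y : ℝ)
    (hv0 : v s = 0) (hv'0 : v' s = 1 / p s)
    (hd : ∀ t, HasDerivAt v (v' t) t)
    (hd2 : ∀ t, HasDerivAt (fun τ => p τ * v' τ) (q t * v t - c * w t * v t) t)
    (hc : 0 ≤ c) (hw : ∀ τ ∈ Icc s y, w τ ≤ 0)
    (hnn : ∀ τ ∈ Icc s y, 0 ≤ v τ) :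
    ∀ t ∈ Ioc s y, 0 < v t := by
  rintro t ⟨hst, hty⟩
  have hsy : s ≤ y := le_trans hst.le hty
  set g : ℝ → ℝ := fun τ => p τ * v' τ with hg
  have hgc : Continuous g := by
    rw [continuous_iff_continuousAt]; exact fun τ => (hd2 τ).continuousAt
  have hvc : Continuous v := by
    rw [continuous_iff_continuousAt]; exact fun τ => (hd τ).continuousAt
  have hgmono : MonotoneOn g (Icc s y) := by
    apply monotoneOn_of_deriv_nonneg (convex_Icc s y) hgc.continuousOn
    · exact fun x _ => ((hd2 x).differentiableAt).differentiableWithinAt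
    · intro x hx
      rw [interior_Icc] at hx
      rw [(hd2 x).deriv]
      have hvx : 0 ≤ v x := hnn x ⟨hx.1.le, hx.2.le⟩
      have h1 : c * w x * v x ≤ 0 := by
        have : w x ≤ 0 := hw x ⟨hx.1.le, hx.2.le⟩
        have : c * w x ≤ 0 := mul_nonpos_of_nonneg_of_nonpos hc this
        exact mul_nonpos_of_nonpos_of_nonneg this hvx
      have h2 : 0 ≤ q x * v x := mul_nonneg (hq x) hvx
      linarith
  have hg1 : ∀ τ ∈ Icc s y, 1 ≤ g τ := by
    intro τ hτ
    have : g s ≤ g τ := hgmono ⟨le_refl s, hsy⟩ hτ hτ.1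
    have hgs : g s = 1 := by
      simp only [hg, hv'0]
      field_simp
      exact div_self (ne_of_gt (hppos s))
    linarith
  have hv'pos : ∀ τ ∈ Icc s y, 0 < v' τ := by
    intro τ hτ
    have h1 : 0 < g τ := lt_of_lt_of_le one_pos (hg1 τ hτ)
    rcases mul_pos_iff.1 h1 with ⟨_, h⟩ | ⟨h, _⟩
    · exact h
    · exact absurd (hppos τ) (not_lt.2 h.le)
  have hmono : StrictMonoOn v (Icc s y) := by
    apply strictMonoOn_of_deriv_pos (convex_Icc s y) hvc.continuousOn
    intro x hx
    rw [interior_Icc] at hx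
    rw [(hd x).deriv]
    exact hv'pos x ⟨hx.1.le, hx.2.le⟩
  have := hmono ⟨le_refl s, hsy⟩ ⟨hst.le, hty⟩ hst
  rwa [hv0] at this

lemma sol_pos (p q w : ℝ → ℝ) (hppos : ∀ t, 0 < p t)
    (hq : ∀ t, 0 ≤ q t) (v v' : ℝ → ℝ) (c s y : ℝ)
    (hv0 : v s = 0) (hv'0 : v' s = 1 / p s)
    (hd : ∀ t, HasDerivAt v (v' t) t)
    (hd2 : ∀ t, HasDerivAt (fun τ => p τ * v' τ) (q t * v t - c * w t * v t) t)
    (hc : 0 ≤ c) (hw : ∀ τ ∈ Icc s y, w τ ≤ 0) :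
    ∀ t ∈ Ioc s y, 0 < v t := by
  -- first prove nonnegativity on Icc s y
  by_cases hsy : s ≤ y
  swap
  · intro t ht; exact absurd (le_trans ht.1.le ht.2) hsy
  have hvc : Continuous v := by
    rw [continuous_iff_continuousAt]; exact fun τ => (hd τ).continuousAt
  have hv's : 0 < v' s := by rw [hv'0]; exact div_pos one_pos (hppos s)
  obtain ⟨ε, hε, hnear⟩ := pos_near v (v' s) s hv0 hv's (hd s)
  set A : Set ℝ := {e | e ∈ Icc s y ∧ ∀ τ ∈ Icc s e, 0 ≤ v τ} with hA
  have hsA : s ∈ A := by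
    refine ⟨⟨le_refl s, hsy⟩, fun τ hτ => ?_⟩
    have : τ = s := le_antisymm hτ.2 hτ.1
    rw [this, hv0]
  have hAne : A.Nonempty := ⟨s, hsA⟩
  have hbdd : BddAbove A := ⟨y, fun e he => he.1.2⟩
  set e₀ := sSup A with he₀
  have hse : s ≤ e₀ := le_csSup hbdd hsA
  have hey : e₀ ≤ y := csSup_le hAne (fun e he => he.1.2)
  have hlt : ∀ τ, s ≤ τ → τ < e₀ → 0 ≤ v τ := by
    intro τ hsτ hτe
    obtain ⟨e, heA, hτe'⟩ := exists_lt_of_lt_csSup hAne hτe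
    exact heA.2 τ ⟨hsτ, hτe'.le⟩
  have heA : e₀ ∈ A := by
    refine ⟨⟨hse, hey⟩, fun τ hτ => ?_⟩
    rcases lt_or_eq_of_le hτ.2 with h | h
    · exact hlt τ hτ.1 h
    · rcases lt_or_eq_of_le (h ▸ hτ.1 : s ≤ e₀) with h' | h'
      · -- τ = e₀ > s : limit from the left
        rw [h]
        apply ge_of_tendsto (hvc.continuousAt.tendsto.mono_left nhdsWithin_le_nhds :
          Tendsto v (𝓝[<] e₀) (𝓝 (v e₀)))
        filter_upwards [Ioo_mem_nhdsLT_of_mem ⟨h', le_refl e₀⟩] with x hx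
        exact hlt x hx.1.le hx.2
      · rw [h, ← h', hv0]
  have hkey : ∀ e', e' ∈ Icc s y → e' ∈ A → e' ≤ e₀ := fun e' _ h => le_csSup hbdd h
  have hey' : e₀ = y := by
    by_contra hne
    have heylt : e₀ < y := lt_of_le_of_ne hey hne
    rcases eq_or_lt_of_le hse with h' | h'
    · -- e₀ = s
      set e' := min (s + ε / 2) y with he'
      have h1 : s < e' := lt_min (by linarith) (lt_of_le_of_lt (h' ▸ hse) heylt)
      have h2 : e' ∈ A := by
        refine ⟨⟨h1.le, min_le_right _ _⟩, fun τ hτ => ?_⟩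
        rcases eq_or_lt_of_le hτ.1 with h | h
        · rw [← h, hv0]
        · refine (hnear τ h (lt_of_le_of_lt (le_trans hτ.2 (min_le_left _ _)) ?_)).le
          linarith
      have := hkey e' ⟨h1.le, min_le_right _ _⟩ h2
      rw [← h'] at this; exact absurd this (not_le.2 h1)
    · -- s < e₀
      have hve : 0 < v e₀ := sol_pos_of_nonneg p q w hppos hq v v' c s e₀ hv0 hv'0 hd hd2 hc
        (fun τ hτ => hw τ ⟨hτ.1, le_trans hτ.2 hey⟩) heA.2 e₀ ⟨h', le_refl e₀⟩
      have hev : ∀ᶠ x in 𝓝 e₀, 0 < v x := hvc.continuousAt.eventually (eventually_gt_nhds hve)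
      rw [Metric.eventually_nhds_iff] at hev
      obtain ⟨δ, hδ, hδ'⟩ := hev
      set e' := min (e₀ + δ / 2) y with he'
      have h1 : e₀ < e' := lt_min (by linarith) heylt
      have h2 : e' ∈ A := by
        refine ⟨⟨le_trans hse h1.le, min_le_right _ _⟩, fun τ hτ => ?_⟩
        rcases le_or_gt τ e₀ with h | h
        · exact heA.2 τ ⟨hτ.1, h⟩
        · have hdist : dist τ e₀ < δ := by
            rw [Real.dist_eq, abs_of_pos (by linarith)]
            have := le_trans hτ.2 (min_le_left _ _)
            linarith
          exact (hδ' hdist).le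
      exact absurd (hkey e' h2.1 h2) (not_le.2 h1)
  exact sol_pos_of_nonneg p q w hppos hq v v' c s y hv0 hv'0 hd hd2 hc hw (hey' ▸ heA.2)

lemma phiE_ge (p q w : ℝ → ℝ) (u u' : ℝ → ℝ → ℝ → ℝ)
    (hSol : IsSolFamily p q w u u') (hppos : ∀ t, 0 < p t) (hq : ∀ t, 0 ≤ q t)
    (c s y : ℝ) (hc : 0 ≤ c) (hw : ∀ τ ∈ Icc s y, w τ ≤ 0) :
    (y : EReal) ≤ phiE u c s := by
  obtain ⟨h0, h1, h2⟩ := hSol c s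
  have hpos := sol_pos p q w hppos hq (u c s) (u' c s) c s y h0 h1
    (fun t => (h2 t).1) (fun t => (h2 t).2) hc hw
  rw [phiE]
  split_ifs with h
  · rw [EReal.coe_le_coe_iff]
    apply le_csInf h
    rintro t ⟨hst, ht⟩
    by_contra hty
    exact absurd ht (ne_of_gt (hpos t ⟨hst, (not_le.1 hty).le⟩))
  · exact le_top

lemma phiE_gt_self (p q w : ℝ → ℝ) (u u' : ℝ → ℝ → ℝ → ℝ)
    (hSol : IsSolFamily p q w u u') (hppos : ∀ t, 0 < p t)
    (c s : ℝ) : (s : EReal) < phiE u c s := by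
  obtain ⟨h0, h1, h2⟩ := hSol c s
  have hv's : 0 < u' c s s := by rw [h1]; exact div_pos one_pos (hppos s)
  obtain ⟨ε, hε, hnear⟩ := pos_near (u c s) (u' c s s) s h0 hv's ((h2 s).1)
  rw [phiE]
  split_ifs with h
  · rw [EReal.coe_lt_coe_iff]
    have : s + ε / 2 ≤ sInf (zeroSet u c s) := by
      apply le_csInf h
      rintro t ⟨hst, ht⟩
      by_contra hty
      exact absurd ht (ne_of_gt (hnear t hst (by linarith [not_le.1 hty])))
    linarith
  · exact EReal.coe_lt_top s

lemma phiStep_ge_self (u : ℝ → ℝ → ℝ → ℝ) (c : ℝ) (x : EReal) : x ≤ phiStep u c x := by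
  rw [phiStep]
  split_ifs with h
  · exact le_top
  · push_neg at h
    nth_rewrite 1 [← EReal.coe_toReal h.1 h.2]
    rw [phiE]
    split_ifs with h'
    · rw [EReal.coe_le_coe_iff]
      exact le_csInf h' (fun t ht => ht.1.le)
    · exact le_top

lemma phiStep_ge (p q w : ℝ → ℝ) (u u' : ℝ → ℝ → ℝ → ℝ)
    (hSol : IsSolFamily p q w u u') (hppos : ∀ t, 0 < p t) (hq : ∀ t, 0 ≤ q t)
    (c lo y : ℝ) (hc : 0 ≤ c) (hw : ∀ τ ∈ Icc lo y, w τ ≤ 0) :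
    ∀ x : EReal, (lo : EReal) ≤ x → (y : EReal) ≤ phiStep u c x := by
  intro x hx
  by_cases h : x = ⊤ ∨ x = ⊥
  · rcases h with h | h
    · rw [phiStep, if_pos (Or.inl h)]; exact le_top
    · rw [h] at hx; exact absurd hx (by simp)
  · push_neg at h
    have hx' : (lo : EReal) ≤ (x.toReal : EReal) := by rwa [EReal.coe_toReal h.1 h.2]
    rw [EReal.coe_le_coe_iff] at hx'
    rw [phiStep, if_neg (by push_neg; exact h)]
    rcases le_or_gt y x.toReal with hle | hlt
    · calc (y : EReal) ≤ (x.toReal : EReal) := EReal.coe_le_coe_iff.2 hle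
        _ = x := EReal.coe_toReal h.1 h.2
        _ ≤ phiStep u c x := phiStep_ge_self u c x
        _ = phiE u c x.toReal := by rw [phiStep, if_neg (by push_neg; exact h)]
    · exact phiE_ge p q w u u' hSol hppos hq c x.toReal y hc
        (fun τ hτ => hw τ ⟨le_trans hx' hτ.1, hτ.2⟩)


/-- Suppose on `[T₁,T₂]` the weight `m` is positive exactly on a
finite union of intervals `(s_i, t_i)`, `i = 1,…,r` (and `≤ 0` outside), while
`n ≤ 0` on each closure `[s_i, t_i]` (so `m⁺·n⁺ ≡ 0`). Then for all `a, b ≥ 0`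
and every `k ≥ 2r+2` one has `Φ_k^>(a,b)(T₁) ≥ T₂`; consequently
`C_k^{>++} = ∅` for all `k ≥ 2r+2`. -/
theorem CGt_empty_of_finitely_many_bumps
    (p q m n : ℝ → ℝ) (uM uM' uN uN' : ℝ → ℝ → ℝ → ℝ) (T₁ T₂ : ℝ)
    (r : ℕ) (hr : 0 < r) (si ti : Fin r → ℝ)
    (hT : T₁ < T₂)
    (hp : Continuous p) (hq : Continuous q) (hm : Continuous m) (hn : Continuous n)
    (hppos : ∀ t, 0 < p t) (hqnn : ∀ t, 0 ≤ q t)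
    (hM : IsSolFamily p q m uM uM') (hN : IsSolFamily p q n uN uN')
    (hst : ∀ i : Fin r, si i < ti i)
    (hchain : ∀ i j : Fin r, i < j → ti i ≤ si j)
    (hT₁ : ∀ i : Fin r, T₁ ≤ si i) (hT₂ : ∀ i : Fin r, ti i ≤ T₂)
    (hmpos : ∀ x ∈ Icc T₁ T₂, (0 < m x ↔ ∃ i : Fin r, x ∈ Ioo (si i) (ti i)))
    (hnneg : ∀ i : Fin r, ∀ x ∈ Icc (si i) (ti i), n x ≤ 0) :
    (∀ a b : ℝ, 0 ≤ a → 0 ≤ b → ∀ k : ℕ, 2 * r + 2 ≤ k →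
      (T₂ : EReal) ≤ PhiGt uM uN a b k (T₁ : EReal)) ∧
    (∀ k : ℕ, 2 * r + 2 ≤ k → CGt uM uN T₁ T₂ k = ∅) := by
  classical
  set E : ℕ → ℝ := fun i => if h : 1 ≤ i ∧ i ≤ r then ti ⟨i - 1, by omega⟩ else T₁ with hE
  set Y : ℕ → ℝ := fun i => if h : i < r then si ⟨i, h⟩ else T₂ with hY
  have hET₁ : ∀ i, T₁ ≤ E i := by
    intro i; rw [hE]; dsimp only; split_ifs with h
    · exact le_trans (hT₁ _) (hst _).le
    · exact le_refl _
  have hYT₂ : ∀ i, Y i ≤ T₂ := by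
    intro i; rw [hY]; dsimp only; split_ifs with h
    · exact le_trans (hst _).le (hT₂ _)
    · exact le_refl _
  have hmle : ∀ i : ℕ, i ≤ r → ∀ τ, E i ≤ τ → τ ≤ Y i → m τ ≤ 0 := by
    intro i hi τ h1 h2
    by_contra hcon
    obtain ⟨j, hj1, hj2⟩ := (hmpos τ ⟨le_trans (hET₁ i) h1, le_trans h2 (hYT₂ i)⟩).1
      (not_le.1 hcon)
    rcases lt_or_ge j.val i with hji | hji
    · have h1i : 1 ≤ i := by omega
      have hEi : E i = ti ⟨i - 1, by omega⟩ := by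
        rw [hE]; dsimp only; rw [dif_pos ⟨h1i, hi⟩]
      have htj : ti j ≤ ti ⟨i - 1, by omega⟩ := by
        rcases eq_or_lt_of_le (by omega : j.val ≤ i - 1) with h | h
        · have hj : j = ⟨i - 1, by omega⟩ := Fin.ext h
          rw [hj]
        · exact le_trans (hchain j ⟨i - 1, by omega⟩ (by simpa [Fin.lt_def] using h))
            (hst _).le
      rw [hEi] at h1
      linarith
    · have hir : i < r := lt_of_le_of_lt hji j.isLt
      have hYi : Y i = si ⟨i, hir⟩ := by rw [hY]; dsimp only; rw [dif_pos hir]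
      have hsj : si ⟨i, hir⟩ ≤ si j := by
        rcases eq_or_lt_of_le hji with h | h
        · have hj : j = ⟨i, hir⟩ := Fin.ext h.symm
          rw [hj]
        · exact le_trans (hst _).le (hchain ⟨i, hir⟩ j (by simpa [Fin.lt_def] using h))
      rw [hYi] at h2
      linarith
  have key : ∀ a b : ℝ, 0 ≤ a → 0 ≤ b → ∀ k : ℕ, 2 * r + 2 ≤ k →
      (T₂ : EReal) < PhiGt uM uN a b k (T₁ : EReal) := by
    intro a b ha hb
    have inv : ∀ i : ℕ, i ≤ r → ((E i : ℝ) : EReal) ≤ PhiGt uM uN a b (2 * i) T₁ := by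
      intro i
      induction i with
      | zero =>
        intro _
        have hE0 : E 0 = T₁ := by rw [hE]; dsimp only; rw [dif_neg (by omega)]
        rw [hE0]
        exact le_of_eq rfl
      | succ i ih =>
        intro hir1
        have hir : i < r := by omega
        have ihh := ih (by omega)
        have hA : ((si ⟨i, hir⟩ : ℝ) : EReal) ≤ PhiGt uM uN a b (2 * i + 1) T₁ := by
          have hrw : PhiGt uM uN a b (2 * i + 1) (T₁ : EReal)
              = phiStep uM a (PhiGt uM uN a b (2 * i) (T₁ : EReal)) := by
            show ((if (2 * i) % 2 = 0 then phiStep uM a else phiStep uN b)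
              ∘ PhiGt uM uN a b (2 * i)) (T₁ : EReal) = _
            rw [Nat.mul_mod_right]
            simp
          rw [hrw]
          refine phiStep_ge p q m uM uM' hM hppos hqnn a (E i) (si ⟨i, hir⟩) ha ?_ _ ihh
          intro τ hτ
          refine hmle i (by omega) τ hτ.1 ?_
          have hYi : Y i = si ⟨i, hir⟩ := by rw [hY]; dsimp only; rw [dif_pos hir]
          rw [hYi]; exact hτ.2
        have hrwB : PhiGt uM uN a b (2 * (i + 1)) (T₁ : EReal)
            = phiStep uN b (PhiGt uM uN a b (2 * i + 1) (T₁ : EReal)) := by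
          have h21 : 2 * (i + 1) = (2 * i + 1) + 1 := by ring
          rw [h21]
          show ((if (2 * i + 1) % 2 = 0 then phiStep uM a else phiStep uN b)
            ∘ PhiGt uM uN a b (2 * i + 1)) (T₁ : EReal) = _
          rw [if_neg (by omega)]
          simp
        rw [hrwB]
        have hEi1 : E (i + 1) = ti ⟨i, hir⟩ := by
          rw [hE]; dsimp only; rw [dif_pos ⟨by omega, by omega⟩]
          exact congrArg ti (Fin.ext (by simp))
        rw [hEi1]
        exact phiStep_ge p q n uN uN' hN hppos hqnn b (si ⟨i, hir⟩) (ti ⟨i, hir⟩) hb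
          (hnneg ⟨i, hir⟩) _ hA
    have step2r1 : (T₂ : EReal) ≤ PhiGt uM uN a b (2 * r + 1) T₁ := by
      have hrw : PhiGt uM uN a b (2 * r + 1) (T₁ : EReal)
          = phiStep uM a (PhiGt uM uN a b (2 * r) (T₁ : EReal)) := by
        show ((if (2 * r) % 2 = 0 then phiStep uM a else phiStep uN b)
          ∘ PhiGt uM uN a b (2 * r)) (T₁ : EReal) = _
        rw [Nat.mul_mod_right]
        simp
      rw [hrw]
      refine phiStep_ge p q m uM uM' hM hppos hqnn a (E r) T₂ ha ?_ _ (inv r (le_refl r))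
      intro τ hτ
      refine hmle r (le_refl r) τ hτ.1 ?_
      have hYr : Y r = T₂ := by rw [hY]; dsimp only; rw [dif_neg (by omega)]
      rw [hYr]; exact hτ.2
    have strict : (T₂ : EReal) < PhiGt uM uN a b (2 * r + 2) T₁ := by
      have hrw : PhiGt uM uN a b (2 * r + 2) (T₁ : EReal)
          = phiStep uN b (PhiGt uM uN a b (2 * r + 1) (T₁ : EReal)) := by
        show ((if (2 * r + 1) % 2 = 0 then phiStep uM a else phiStep uN b)
          ∘ PhiGt uM uN a b (2 * r + 1)) (T₁ : EReal) = _
        rw [if_neg (by omega)]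
        simp
      rw [hrw]
      set x := PhiGt uM uN a b (2 * r + 1) (T₁ : EReal) with hx
      by_cases htop : x = ⊤
      · rw [phiStep, if_pos (Or.inl htop)]
        exact EReal.coe_lt_top T₂
      · have hbot : x ≠ ⊥ := by
          intro hb'
          rw [hb'] at step2r1
          exact absurd step2r1 (by simp)
        rw [phiStep, if_neg (by push_neg; exact ⟨htop, hbot⟩)]
        have h1 : (T₂ : EReal) ≤ ((x.toReal : ℝ) : EReal) := by
          rwa [EReal.coe_toReal htop hbot]
        exact lt_of_le_of_lt h1 (phiE_gt_self p q n uN uN' hN hppos b x.toReal)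
    intro k hk
    induction k with
    | zero => omega
    | succ k ih =>
      rcases eq_or_lt_of_le hk with h | h
      · rw [← h]; exact strict
      · have hk' : 2 * r + 2 ≤ k := by omega
        have ihh := ih hk'
        have hstep : PhiGt uM uN a b k (T₁ : EReal) ≤ PhiGt uM uN a b (k + 1) (T₁ : EReal) := by
          show _ ≤ ((if k % 2 = 0 then phiStep uM a else phiStep uN b)
            ∘ PhiGt uM uN a b k) (T₁ : EReal)
          split_ifs with h'
          · exact phiStep_ge_self uM a _
          · exact phiStep_ge_self uN b _
        exact lt_of_lt_of_le ihh hstep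
  refine ⟨fun a b ha hb k hk => (key a b ha hb k hk).le, fun k hk => ?_⟩
  rw [Set.eq_empty_iff_forall_notMem]
  rintro ⟨a, b⟩ ⟨ha, hb, heq⟩
  have hlt := key a b ha.le hb.le k hk
  rw [heq] at hlt
  exact lt_irrefl _ hlt
end
end
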